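/- There exists ε_0 > 0 such that for every ε ∈ (0, ε_0] and every u ∈ ℝ one has |f_ε′(u) − f_0′(u)| ≤ ε |u|^{p−1} ( p ln(ln(e + |u|)) + 1/ln(e + |u|) ), where f_ε′ is the derivative of f_ε and f_0′(u) = p|u|^{p−1}. -/

import Mathlib

open Real

/-- The critical exponent `p = (n+2)/(n-2)`. -/
noncomputable def pCrit (n : ℕ) : ℝ := ((n : ℝ) + 2) / ((n : ℝ) - 2)

/-- The non-power nonlinearity `f_ε(u) = |u|^{p-1} u / (ln(e+|u|))^ε`;
in particular `f_0(u) = |u|^{p-1} u`. -/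
noncomputable def fEps (n : ℕ) (ε u : ℝ) : ℝ :=
  |u| ^ (pCrit n - 1) * u / (Real.log (Real.exp 1 + |u|)) ^ ε

lemma hasDerivAt_fEps (n : ℕ) (ε : ℝ) {u : ℝ} (hu : u ≠ 0) :
    HasDerivAt (fEps n ε)
      (|u| ^ (pCrit n - 1) *
        (pCrit n * (Real.log (Real.exp 1 + |u|)) ^ (-ε)
          - ε * (|u| / (Real.exp 1 + |u|)) * (Real.log (Real.exp 1 + |u|)) ^ (-(ε + 1)))) u := by
  have ha : (0:ℝ) < |u| := abs_pos.2 hu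
  have he : (0:ℝ) < Real.exp 1 + |u| := by positivity
  have hL1 : 1 ≤ Real.log (Real.exp 1 + |u|) := by
    have h1 : Real.log (Real.exp 1) ≤ Real.log (Real.exp 1 + |u|) :=
      Real.log_le_log (Real.exp_pos 1) (by linarith)
    rwa [Real.log_exp] at h1
  have hL0 : (0:ℝ) < Real.log (Real.exp 1 + |u|) := by linarith
  set s : ℝ := (SignType.sign u : ℝ) with hsdef
  have habs : HasDerivAt (fun x : ℝ => |x|) s u := hasDerivAt_abs hu
  have hs : s * u = |u| := by
    rcases hu.lt_or_gt with h | h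
    · simp [hsdef, h, abs_of_neg h]
    · simp [hsdef, h, abs_of_pos h]
  set L : ℝ := Real.log (Real.exp 1 + |u|) with hLdef
  have hN : HasDerivAt (fun x : ℝ => |x| ^ (pCrit n - 1) * x)
      (pCrit n * |u| ^ (pCrit n - 1)) u := by
    have h1 := (habs.rpow_const (p := pCrit n - 1) (Or.inl ha.ne')).mul (hasDerivAt_id u)
    convert h1 using 1
    · rfl
    · rfl
    · rfl
    have h2 : |u| ^ (pCrit n - 1) = |u| ^ (pCrit n - 1 - 1) * |u| := by
      rw [← Real.rpow_add_one ha.ne']; ring_nf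
    have h3 : s * (pCrit n - 1) * |u| ^ (pCrit n - 1 - 1) * u
        = (pCrit n - 1) * (|u| ^ (pCrit n - 1 - 1) * |u|) := by
      rw [← hs]; ring
    simp only [id_eq]
    rw [h3, ← h2]; ring
  have hD : HasDerivAt (fun x : ℝ => (Real.log (Real.exp 1 + |x|)) ^ ε)
      (s / (Real.exp 1 + |u|) * ε * L ^ (ε - 1)) u := by
    have h2 : HasDerivAt (fun x : ℝ => Real.exp 1 + |x|) s u := habs.const_add (Real.exp 1)
    have h3 := h2.log he.ne'
    exact h3.rpow_const (Or.inl hL0.ne')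
  have hE : (0:ℝ) < L ^ ε := Real.rpow_pos_of_pos hL0 ε
  have hdiv := hN.div hD hE.ne'
  have hfe : fEps n ε = fun x : ℝ => |x| ^ (pCrit n - 1) * x / (Real.log (Real.exp 1 + |x|)) ^ ε := rfl
  rw [hfe]
  convert hdiv using 1
  · rfl
  · rfl
  · rfl
  have e1 : L ^ (-ε) = (L ^ ε)⁻¹ := by rw [Real.rpow_neg hL0.le]
  have e2 : L ^ (ε - 1) = L ^ ε / L := by
    rw [Real.rpow_sub hL0, Real.rpow_one]
  have e3 : L ^ (-(ε + 1)) = (L ^ ε * L)⁻¹ := by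
    rw [Real.rpow_neg hL0.le, Real.rpow_add_one hL0.ne']
  rw [e1, e2, e3]
  have key : |u| ^ (pCrit n - 1) * u * (s / (Real.exp 1 + |u|) * ε * (L ^ ε / L))
      = |u| ^ (pCrit n - 1) * |u| * (ε * (L ^ ε / L) / (Real.exp 1 + |u|)) := by
    rw [← hs]; ring
  rw [key]
  rw [← hLdef]
  field_simp

lemma onelt_pCrit (n : ℕ) (hn : 3 ≤ n) : 1 < pCrit n := by
  have hn' : (3:ℝ) ≤ n := by exact_mod_cast hn
  have hd : (0:ℝ) < (n:ℝ) - 2 := by linarith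
  rw [pCrit, lt_div_iff₀ hd]; linarith

lemma hasDerivAt_fEps_zero (n : ℕ) (hn : 3 ≤ n) {ε : ℝ} (hε : 0 < ε) :
    HasDerivAt (fEps n ε) 0 0 := by
  have hp := onelt_pCrit n hn
  rw [hasDerivAt_iff_tendsto_slope]
  apply squeeze_zero_norm (a := fun x : ℝ => |x| ^ (pCrit n - 1))
  · intro x
    rcases eq_or_ne x 0 with rfl | hx
    · simp [slope, fEps, Real.zero_rpow (by linarith : pCrit n - 1 ≠ 0)]
    · have ha : (0:ℝ) < |x| := abs_pos.2 hx
      have hL1 : 1 ≤ Real.log (Real.exp 1 + |x|) := by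
        have h1 : Real.log (Real.exp 1) ≤ Real.log (Real.exp 1 + |x|) :=
          Real.log_le_log (Real.exp_pos 1) (by linarith)
        rwa [Real.log_exp] at h1
      have hE : 1 ≤ (Real.log (Real.exp 1 + |x|)) ^ ε :=
        Real.one_le_rpow hL1 hε.le
      have h0 : fEps n ε 0 = 0 := by simp [fEps]
      have hsl : slope (fEps n ε) 0 x = |x| ^ (pCrit n - 1) / (Real.log (Real.exp 1 + |x|)) ^ ε := by
        rw [slope_def_field, h0, fEps]
        field_simp
        ring
      rw [Real.norm_eq_abs, hsl, abs_div, abs_of_nonneg (by positivity : (0:ℝ) ≤ |x| ^ (pCrit n - 1)),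
        abs_of_nonneg (by positivity : (0:ℝ) ≤ (Real.log (Real.exp 1 + |x|)) ^ ε)]
      exact div_le_self (by positivity) hE
  · have h1 : Filter.Tendsto (fun x : ℝ => |x| ^ (pCrit n - 1)) (nhds 0) (nhds 0) := by
      have h2 : Filter.Tendsto (fun x : ℝ => |x|) (nhds 0) (nhds 0) := by
        simpa using continuous_abs.tendsto (0:ℝ)
      have h3 := h2.rpow_const (p := pCrit n - 1) (Or.inr (by linarith))
      simpa [Real.zero_rpow (by linarith : pCrit n - 1 ≠ 0)] using h3
    exact h1.mono_left nhdsWithin_le_nhds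


/-- There exists `ε₀ > 0` such that for every `ε ∈ (0, ε₀]` and every `u ∈ ℝ`,
`|f_ε′(u) - f_0′(u)| ≤ ε |u|^{p-1} ( p ln(ln(e+|u|)) + 1/ln(e+|u|) )`,
where `f_0′(u) = p |u|^{p-1}`. -/
theorem deriv_fEps_sub_deriv_fZero_bound (n : ℕ) (hn : 3 ≤ n) :
    ∃ ε₀ > (0 : ℝ), ∀ ε : ℝ, 0 < ε → ε ≤ ε₀ → ∀ u : ℝ,
      |deriv (fEps n ε) u - pCrit n * |u| ^ (pCrit n - 1)| ≤
        ε * |u| ^ (pCrit n - 1) *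
          (pCrit n * Real.log (Real.log (Real.exp 1 + |u|)) +
            1 / Real.log (Real.exp 1 + |u|)) := by
  have hp := onelt_pCrit n hn
  refine ⟨1, one_pos, fun ε hε hε1 u => ?_⟩
  rcases eq_or_ne u 0 with rfl | hu
  · rw [(hasDerivAt_fEps_zero n hn hε).deriv]
    simp [Real.zero_rpow (by linarith : pCrit n - 1 ≠ 0)]
  · rw [(hasDerivAt_fEps n ε hu).deriv]
    have ha : (0:ℝ) < |u| := abs_pos.2 hu
    have he : (0:ℝ) < Real.exp 1 + |u| := by positivity
    set L : ℝ := Real.log (Real.exp 1 + |u|) with hLdef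
    have hL1 : 1 ≤ L := by
      have h1 : Real.log (Real.exp 1) ≤ Real.log (Real.exp 1 + |u|) :=
        Real.log_le_log (Real.exp_pos 1) (by linarith)
      rwa [Real.log_exp] at h1
    have hL0 : (0:ℝ) < L := by linarith
    set a : ℝ := |u| ^ (pCrit n - 1) with hadef
    have ha0 : 0 ≤ a := Real.rpow_nonneg ha.le _
    set t : ℝ := |u| / (Real.exp 1 + |u|) with htdef
    have ht0 : 0 ≤ t := by positivity
    have hexp : (0:ℝ) < Real.exp 1 := Real.exp_pos 1
    have ht1 : t ≤ 1 := by rw [htdef, div_le_one he]; linarith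
    have hlogL : 0 ≤ Real.log L := Real.log_nonneg hL1
    have hLe1 : L ^ (-ε) ≤ 1 := Real.rpow_le_one_of_one_le_of_nonpos hL1 (by linarith)
    have hLe0 : 0 ≤ L ^ (-ε) := (Real.rpow_pos_of_pos hL0 _).le
    have hLp0 : 0 ≤ L ^ (-(ε + 1)) := (Real.rpow_pos_of_pos hL0 _).le
    have hLple : L ^ (-(ε + 1)) ≤ 1 / L := by
      have := Real.rpow_le_rpow_of_exponent_le hL1 (by linarith : -(ε+1) ≤ -1)
      rwa [Real.rpow_neg_one, ← one_div] at this
    have ineq1 : 1 - L ^ (-ε) ≤ ε * Real.log L := by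
      rw [Real.rpow_def_of_pos hL0]
      have := Real.add_one_le_exp (Real.log L * -ε)
      nlinarith
    have ineq2 : ε * t * L ^ (-(ε + 1)) ≤ ε * (1 / L) := by
      have h2 : t * L ^ (-(ε + 1)) ≤ 1 * (1 / L) := by
        apply mul_le_mul ht1 hLple hLp0 zero_le_one
      nlinarith
    have hY : pCrit n * L ^ (-ε) - ε * t * L ^ (-(ε + 1)) - pCrit n ≤ 0 := by
      have h1 : pCrit n * L ^ (-ε) ≤ pCrit n * 1 := mul_le_mul_of_nonneg_left hLe1 (by linarith)
      have h2 : 0 ≤ ε * t * L ^ (-(ε + 1)) := by positivity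
      linarith
    have habsY : |a * (pCrit n * L ^ (-ε) - ε * t * L ^ (-(ε + 1))) - pCrit n * a|
        = a * (pCrit n * (1 - L ^ (-ε)) + ε * t * L ^ (-(ε + 1))) := by
      rw [show a * (pCrit n * L ^ (-ε) - ε * t * L ^ (-(ε + 1))) - pCrit n * a
          = a * (pCrit n * L ^ (-ε) - ε * t * L ^ (-(ε + 1)) - pCrit n) by ring,
        abs_mul, abs_of_nonneg ha0, abs_of_nonpos hY]
      ring
    rw [habsY]
    have hsum : pCrit n * (1 - L ^ (-ε)) + ε * t * L ^ (-(ε + 1))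
        ≤ ε * (pCrit n * Real.log L + 1 / L) := by
      have h4 : pCrit n * (1 - L ^ (-ε)) ≤ pCrit n * (ε * Real.log L) :=
        mul_le_mul_of_nonneg_left ineq1 (by linarith)
      nlinarith
    calc a * (pCrit n * (1 - L ^ (-ε)) + ε * t * L ^ (-(ε + 1)))
        ≤ a * (ε * (pCrit n * Real.log L + 1 / L)) := mul_le_mul_of_nonneg_left hsum ha0
      _ = ε * a * (pCrit n * Real.log L + 1 / L) := by ring
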